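/- The Hermite coefficients of the ReLU function satisfy |σ̂_k| = Θ(k^{−5/4}) over even k: there exist constants 0 < c ≤ C such that for all even k ≥ 2, c·k^{−5/4} ≤ |σ̂_k| ≤ C·k^{−5/4}. -/

import Mathlib

open MeasureTheory ProbabilityTheory Real

/-- normalized probabilists' Hermite polynomial `h_k = H_k / √(k!)` -/
noncomputable def hermiteN (k : ℕ) (x : ℝ) : ℝ :=
  (Polynomial.aeval x (Polynomial.hermite k)) / Real.sqrt (Nat.factorial k)

/-- `k`-th Hermite coefficient of ReLU: `σ̂_k = E_{x∼N(0,1)}[max(0,x) h_k(x)]`. -/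
noncomputable def reluCoeff (k : ℕ) : ℝ :=
  ∫ x, max 0 x * hermiteN k x ∂(gaussianReal 0 1)

open Polynomial
open scoped NNReal ENNReal Nat
open scoped NNReal ENNReal

lemma deriv_hermite' : ∀ n : ℕ, derivative (hermite (n+1)) = ((n : Polynomial ℤ)+1) * hermite n
  | 0 => by simp [hermite_one]
  | (m+1) => by
    have hm : derivative (hermite m) = X * hermite m - hermite (m+1) := by
      rw [hermite_succ m]; ring
    rw [hermite_succ (m+1), derivative_sub, derivative_mul, derivative_X,
      deriv_hermite' m, derivative_mul, derivative_add, derivative_natCast, derivative_one, hm]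
    push_cast
    ring

lemma tendsto_pow_gauss (n : ℕ) :
    Filter.Tendsto (fun x : ℝ => x^n * Real.exp (-(x^2/2))) Filter.atTop (nhds 0) := by
  have hg : Filter.Tendsto (fun x : ℝ => Real.exp (-(1/2) * x)) Filter.atTop (nhds 0) := by
    have h2 : Filter.Tendsto (fun x : ℝ => -(1/2) * x) Filter.atTop Filter.atBot := by
      apply Filter.Tendsto.const_mul_atTop_of_neg (by norm_num) Filter.tendsto_id
    exact Real.tendsto_exp_atBot.comp h2
  have h := (rpow_mul_exp_neg_mul_sq_isLittleO_exp_neg (by norm_num : (0:ℝ) < 1/2)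
    (n : ℝ)).tendsto_zero_of_tendsto hg
  refine h.congr (fun x => ?_)
  rw [Real.rpow_natCast, show (-(1/2)*x^2 : ℝ) = -(x^2/2) by ring]

lemma integrable_pow_gauss (n : ℕ) :
    Integrable (fun x : ℝ => x^n * Real.exp (-(x^2/2))) := by
  have h := integrable_rpow_mul_exp_neg_mul_sq (by norm_num : (0:ℝ) < 1/2)
    (s := (n:ℝ)) (lt_of_lt_of_le neg_one_lt_zero (Nat.cast_nonneg n))
  exact h.congr (Filter.Eventually.of_forall fun x =>
    show x ^ (n:ℝ) * Real.exp (-(1/2)*x^2) = x ^ n * Real.exp (-(x^2/2)) by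
      rw [Real.rpow_natCast, show (-(1/2)*x^2 : ℝ) = -(x^2/2) by ring])

lemma aeval_sum_range (p : Polynomial ℤ) (x : ℝ) :
    aeval x p = ∑ i ∈ Finset.range (p.natDegree + 1), (p.coeff i : ℝ) * x ^ i := by
  rw [aeval_eq_sum_range]
  simp [zsmul_eq_mul]

lemma tendsto_aeval_gauss (p : Polynomial ℤ) :
    Filter.Tendsto (fun x : ℝ => aeval x p * Real.exp (-(x^2/2))) Filter.atTop (nhds 0) := by
  have : (fun x : ℝ => aeval x p * Real.exp (-(x^2/2)))
      = fun x => ∑ i ∈ Finset.range (p.natDegree + 1),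
        (p.coeff i : ℝ) * (x^i * Real.exp (-(x^2/2))) := by
    funext x; rw [aeval_sum_range, Finset.sum_mul]; congr 1; funext i; ring
  rw [this]
  have := tendsto_finset_sum (Finset.range (p.natDegree + 1))
    (fun i _ => ((tendsto_pow_gauss i).const_mul ((p.coeff i : ℝ))))
  simpa using this

lemma integrable_aeval_gauss (p : Polynomial ℤ) :
    Integrable (fun x : ℝ => aeval x p * Real.exp (-(x^2/2))) := by
  have : (fun x : ℝ => aeval x p * Real.exp (-(x^2/2)))
      = fun x => ∑ i ∈ Finset.range (p.natDegree + 1),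
        (p.coeff i : ℝ) * (x^i * Real.exp (-(x^2/2))) := by
    funext x; rw [aeval_sum_range, Finset.sum_mul]; congr 1; funext i; ring
  rw [this]
  exact integrable_finset_sum _ (fun i _ => (integrable_pow_gauss i).const_mul _)

lemma hasDerivAt_gauss (x : ℝ) :
    HasDerivAt (fun x : ℝ => Real.exp (-(x^2/2))) (-x * Real.exp (-(x^2/2))) x := by
  have h1 : HasDerivAt (fun x : ℝ => -(x^2/2)) (-x) x := by
    simpa [Pi.neg_def] using (((hasDerivAt_pow 2 x)).div_const 2).neg
  simpa [mul_comm] using h1.exp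

lemma hasDerivAt_F (n : ℕ) (x : ℝ) :
    HasDerivAt (fun y : ℝ => (aeval y (hermite (n+2)) + ((n:ℝ)+2) * aeval y (hermite n))
        * Real.exp (-(y^2/2)))
      (-(x * aeval x (hermite (n+2)) * Real.exp (-(x^2/2)))) x := by
  set P : Polynomial ℤ := hermite (n+2) + ((n : Polynomial ℤ)+2) * hermite n with hP
  have hPval : ∀ y : ℝ, aeval y P = aeval y (hermite (n+2)) + ((n:ℝ)+2) * aeval y (hermite n) := by
    intro y
    simp only [hP, map_add, map_mul, map_natCast, map_ofNat]
  have hder : derivative P = ((n : Polynomial ℤ)+2) * (X * hermite n) := by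
    have h1 : derivative (hermite (n+2)) = ((n : Polynomial ℤ)+1+1) * hermite (n+1) := by
      have := deriv_hermite' (n+1)
      rw [this]; push_cast; ring
    have h2 : derivative (hermite n) = X * hermite n - hermite (n+1) := by
      rw [hermite_succ n]; ring
    have hc : ((n : Polynomial ℤ)+2) = ((n+2 : ℕ) : Polynomial ℤ) := by push_cast; ring
    rw [hP, derivative_add, h1, hc, derivative_mul, derivative_natCast, h2]
    push_cast
    ring
  have h := (P.hasDerivAt_aeval x).mul (hasDerivAt_gauss x)
  have hfun : (fun y : ℝ => aeval y P * Real.exp (-(y^2/2)))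
      = (fun y : ℝ => (aeval y (hermite (n+2)) + ((n:ℝ)+2) * aeval y (hermite n))
        * Real.exp (-(y^2/2))) := funext fun y => by rw [hPval]
  simp only [Pi.mul_def] at h
  rw [hfun] at h
  have hval : aeval x (derivative P) * Real.exp (-(x^2/2)) + _root_.id
      ((aeval x (hermite (n+2)) + ((n:ℝ)+2) * aeval x (hermite n)))
        * (-x * Real.exp (-(x^2/2)))
      = -(x * aeval x (hermite (n+2)) * Real.exp (-(x^2/2))) := by
    rw [hder]
    simp only [map_mul, map_add, map_natCast, map_ofNat, aeval_X, _root_.id]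
    ring
  rw [← hval]
  refine h.congr_deriv ?_
  rw [hPval]
  simp [_root_.id]

lemma integral_Ioi_eq (n : ℕ) :
    ∫ x in Set.Ioi (0:ℝ), x * aeval x (hermite (n+2)) * Real.exp (-(x^2/2))
      = aeval (0:ℝ) (hermite (n+2)) + ((n:ℝ)+2) * aeval (0:ℝ) (hermite n) := by
  have hint : Integrable (fun x : ℝ => -(x * aeval x (hermite (n+2)) * Real.exp (-(x^2/2)))) := by
    have h := (integrable_aeval_gauss (X * hermite (n+2))).neg
    refine h.congr (Filter.Eventually.of_forall fun x => ?_)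
    simp only [Pi.neg_apply, map_mul, aeval_X]
  have key := integral_Ioi_of_hasDerivAt_of_tendsto
    (f := fun y : ℝ => (aeval y (hermite (n+2)) + ((n:ℝ)+2) * aeval y (hermite n))
        * Real.exp (-(y^2/2)))
    (f' := fun x : ℝ => -(x * aeval x (hermite (n+2)) * Real.exp (-(x^2/2)))) (a := 0) (m := 0)
    ?_ (fun x _ => hasDerivAt_F n x) hint.integrableOn ?_
  · rw [integral_neg] at key
    have h0 : Real.exp (-((0:ℝ)^2/2)) = 1 := by norm_num
    simp only [h0, mul_one] at key
    linarith [key]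
  · apply Continuous.continuousWithinAt
    exact (((hermite (n+2)).continuous_aeval).add
      (continuous_const.mul ((hermite n).continuous_aeval))).mul
      (Real.continuous_exp.comp (by continuity))
  · have h := tendsto_aeval_gauss (hermite (n+2) + ((n : Polynomial ℤ)+2) * hermite n)
    refine h.congr (fun y => ?_)
    simp only [map_add, map_mul, map_natCast, map_ofNat]

lemma gaussianPDFReal_eq (x : ℝ) :
    gaussianPDFReal 0 1 x = (Real.sqrt (2*π))⁻¹ * Real.exp (-(x^2/2)) := by
  rw [gaussianPDFReal]
  push_cast
  rw [show (-(x-0)^2/(2*(1:ℝ)) : ℝ) = -(x^2/2) by ring]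
  norm_num

lemma reluCoeff_eq (n : ℕ) :
    reluCoeff (n+2) = (Real.sqrt (2*π))⁻¹ * (Real.sqrt (Nat.factorial (n+2) : ℝ))⁻¹ *
      (aeval (0:ℝ) (hermite (n+2)) + ((n:ℝ)+2) * aeval (0:ℝ) (hermite n)) := by
  rw [reluCoeff, gaussianReal_of_var_ne_zero _ one_ne_zero]
  have hdens : gaussianPDF 0 1 = fun x => ((Real.toNNReal (gaussianPDFReal 0 1 x) : ℝ≥0) : ℝ≥0∞) :=
    rfl
  rw [hdens, integral_withDensity_eq_integral_smul ((measurable_gaussianPDFReal 0 1).real_toNNReal)]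
  set c : ℝ := (Real.sqrt (2*π))⁻¹ * (Real.sqrt (Nat.factorial (n+2) : ℝ))⁻¹ with hc
  have hptw : ∀ x : ℝ, (Real.toNNReal (gaussianPDFReal 0 1 x)) • (max 0 x * hermiteN (n+2) x)
      = c * Set.indicator (Set.Ioi 0)
          (fun x => x * aeval x (hermite (n+2)) * Real.exp (-(x^2/2))) x := by
    intro x
    rw [NNReal.smul_def, smul_eq_mul, Real.coe_toNNReal _ (gaussianPDFReal_nonneg 0 1 x),
      gaussianPDFReal_eq]
    rcases le_or_gt x 0 with hx | hx
    · rw [Set.indicator_of_notMem (by simpa using hx), max_eq_left hx]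
      simp
    · rw [Set.indicator_of_mem (Set.mem_Ioi.mpr hx), max_eq_right hx.le, hermiteN, hc]
      rw [div_eq_mul_inv]
      ring
  rw [integral_congr_ae (Filter.Eventually.of_forall hptw), integral_const_mul,
    integral_indicator measurableSet_Ioi, integral_Ioi_eq]

lemma dfac_succ (i : ℕ) : (2*i+1)‼ = (2*i+1) * (2*i-1)‼ := by
  cases i with
  | zero => rfl
  | succ j =>
    have h1 : 2*(j+1)+1 = (2*j+1)+2 := by ring
    have h2 : 2*(j+1)-1 = 2*j+1 := by omega
    rw [h1, h2, Nat.doubleFactorial_add_two]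

lemma fact1 : ∀ i : ℕ, ((2*i-1)‼)^2 * (4^i * (2*(i+1)) * (2*i+1)) = Nat.centralBinom i * (2*i+2)!
  | 0 => rfl
  | (i+1) => by
    have IH := fact1 i
    have scbs := Nat.succ_mul_centralBinom_succ i
    apply Nat.eq_of_mul_eq_mul_left (show 0 < i+1 by omega)
    have h2 : 2*(i+1)-1 = 2*i+1 := by omega
    rw [h2, dfac_succ]
    have h3 : (2*(i+1)+2)! = (2*(i+1)+2) * ((2*(i+1)+1) * (2*i+2)!) := by
      rw [show 2*(i+1)+2 = (2*(i+1)+1)+1 by ring, Nat.factorial_succ,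
        show 2*(i+1)+1 = (2*i+2)+1 by ring, Nat.factorial_succ]
    rw [h3]
    zify at IH scbs ⊢
    linear_combination (-((2*i+4)*(2*i+3)) * ((2*i+2)! : ℤ)) * scbs
      + (2*(2*i+1)*(2*i+4)*(2*i+3) : ℤ) * IH

lemma fact2 : ∀ i : ℕ, (2*i+1) * (Nat.centralBinom i)^2 ≤ 16^i
  | 0 => le_refl 1
  | (i+1) => by
    have IH := fact2 i
    have scbs := Nat.succ_mul_centralBinom_succ i
    have key : (i+1)^2 * ((2*(i+1)+1) * (Nat.centralBinom (i+1))^2) ≤ (i+1)^2 * 16^(i+1) := by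
      have e : (i+1)^2 * ((2*(i+1)+1) * (Nat.centralBinom (i+1))^2)
          = (2*i+3) * ((i+1) * Nat.centralBinom (i+1))^2 := by ring
      rw [e, scbs]
      calc (2*i+3) * (2*(2*i+1)*Nat.centralBinom i)^2
          = (4*(2*i+3)*(2*i+1)) * ((2*i+1) * (Nat.centralBinom i)^2) := by ring
        _ ≤ (4*(2*i+3)*(2*i+1)) * 16^i := Nat.mul_le_mul_left _ IH
        _ ≤ (16*(i+1)^2) * 16^i := Nat.mul_le_mul_right _ (by nlinarith)
        _ = (i+1)^2 * 16^(i+1) := by ring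
    exact Nat.le_of_mul_le_mul_left key (by positivity)

lemma fact3 : ∀ i : ℕ, 1 ≤ i → 16^i ≤ 4*i * (Nat.centralBinom i)^2
  | 0 => by omega
  | 1 => fun _ => by decide
  | (i+2) => fun _ => by
    have IH := fact3 (i+1) (by omega)
    have scbs := Nat.succ_mul_centralBinom_succ (i+1)
    have key : (i+2)^2 * 16^(i+2) ≤ (i+2)^2 * (4*(i+2) * (Nat.centralBinom (i+2))^2) := by
      have e : (i+2)^2 * (4*(i+2) * (Nat.centralBinom (i+2))^2)
          = 4*(i+2) * ((i+2) * Nat.centralBinom (i+2))^2 := by ring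
      rw [e, scbs]
      calc (i+2)^2 * 16^(i+2) = (16*(i+2)^2) * 16^(i+1) := by ring
        _ ≤ (16*(i+2)^2) * (4*(i+1) * (Nat.centralBinom (i+1))^2) := Nat.mul_le_mul_left _ IH
        _ = (64*(i+1)*(i+2)^2) * (Nat.centralBinom (i+1))^2 := by ring
        _ ≤ (16*(i+2)*(2*(i+1)+1)^2) * (Nat.centralBinom (i+1))^2 := Nat.mul_le_mul_right _ (by nlinarith)
        _ = 4*(i+2) * (2*(2*(i+1)+1)*Nat.centralBinom (i+1))^2 := by ring
    exact Nat.le_of_mul_le_mul_left key (by positivity)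

lemma fact3' (i : ℕ) : 16^i ≤ 4*(i+1) * (Nat.centralBinom i)^2 := by
  cases i with
  | zero => norm_num [Nat.centralBinom]
  | succ j => exact le_trans (fact3 (j+1) (by omega)) (Nat.mul_le_mul_right _ (by omega))

lemma aeval_zero_eq (p : Polynomial ℤ) : aeval (0:ℝ) p = ((p.coeff 0 : ℤ) : ℝ) := by
  rw [aeval_def, eval₂_at_zero]
  simp

lemma reluCoeff_abs (i : ℕ) :
    |reluCoeff (2*i+2)| = ((2*i-1)‼ : ℝ) /
      (Real.sqrt (2*π) * Real.sqrt (Nat.factorial (2*i+2) : ℝ)) := by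
  have hre := reluCoeff_eq (2*i)
  have c1 : (hermite (2*i)).coeff 0 = (-1)^i * (2*i-1)‼ := by
    have := coeff_hermite_explicit i 0
    simpa using this
  have c2 : (hermite (2*i+2)).coeff 0 = (-1)^(i+1) * ((2*i+1) * (2*i-1)‼) := by
    have := coeff_hermite_explicit (i+1) 0
    rw [show 2*(i+1)+0 = 2*i+2 by ring] at this
    rw [this, show 2*(i+1)-1 = 2*i+1 by omega, dfac_succ]
    simp [show 2*(i+1)-1 = 2*i+1 by omega]
  rw [hre, aeval_zero_eq, aeval_zero_eq, c1, c2]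
  have hval : ((((-1:ℤ))^(i+1) * ((2*i+1) * (2*i-1)‼) : ℤ) : ℝ)
      + (((2*i : ℕ):ℝ)+2) * (((-1:ℤ)^i * (2*i-1)‼ : ℤ) : ℝ)
      = (-1:ℝ)^i * ((2*i-1)‼ : ℝ) := by
    push_cast
    ring
  rw [hval]
  rw [abs_mul, abs_mul, abs_mul, abs_pow, abs_neg, abs_one, one_pow, one_mul,
    abs_of_nonneg (show (0:ℝ) ≤ (Real.sqrt (2*π))⁻¹ by positivity),
    abs_of_nonneg (show (0:ℝ) ≤ (Real.sqrt ((Nat.factorial (2*i+2) : ℕ) : ℝ))⁻¹ by positivity),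
    abs_of_nonneg (show (0:ℝ) ≤ (((2*i-1)‼ : ℕ) : ℝ) by positivity)]
  rw [div_eq_mul_inv, mul_inv]
  ring

lemma sqle {a b : ℝ} (ha : 0 ≤ a) (hb : 0 ≤ b) (h : a^2 ≤ b^2) : a ≤ b := by nlinarith

set_option maxHeartbeats 2000000 in
lemma partB (i : ℕ) :
    (1/(2*Real.sqrt π)) * (((2*i+2 : ℕ)):ℝ) ^ (-(5:ℝ)/4)
      ≤ ((2*i-1)‼ : ℝ) / (Real.sqrt (2*π) * Real.sqrt (Nat.factorial (2*i+2) : ℝ)) ∧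
    ((2*i-1)‼ : ℝ) / (Real.sqrt (2*π) * Real.sqrt (Nat.factorial (2*i+2) : ℝ))
      ≤ 1 * (((2*i+2 : ℕ)):ℝ) ^ (-(5:ℝ)/4) := by
  set D : ℝ := ((2*i-1)‼ : ℝ) with hD
  set F : ℝ := (Nat.factorial (2*i+2) : ℝ) with hF
  set B : ℝ := (Nat.centralBinom i : ℝ) with hB
  set Q : ℝ := (4:ℝ)^i with hQ
  have hDpos : 0 < D := by rw [hD]; exact_mod_cast Nat.doubleFactorial_pos _
  have hFpos : 0 < F := by rw [hF]; exact_mod_cast Nat.factorial_pos _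
  have hBpos : 0 < B := by rw [hB]; exact_mod_cast Nat.centralBinom_pos i
  have hQpos : 0 < Q := by positivity
  have hπ := Real.pi_pos
  have fact1R : D^2 * (Q * (2*(i:ℝ)+2) * (2*(i:ℝ)+1)) = B * F := by
    have h := congrArg (fun n : ℕ => (n : ℝ)) (fact1 i)
    push_cast at h
    rw [hD, hF, hB, hQ]
    convert h using 1 <;> push_cast <;> ring
  have fact2R : (2*(i:ℝ)+1) * B^2 ≤ Q^2 := by
    have h2 : (((2*i+1) * (Nat.centralBinom i)^2 : ℕ) : ℝ) ≤ ((16^i : ℕ) : ℝ) := by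
      exact_mod_cast fact2 i
    push_cast at h2
    rw [hB, hQ]
    calc (2*(i:ℝ)+1) * ((Nat.centralBinom i : ℝ))^2 ≤ (16:ℝ)^i := by linarith
      _ = ((4:ℝ)^i)^2 := by rw [← pow_mul, mul_comm i 2, pow_mul]; norm_num
  have fact3R : Q^2 ≤ (4*(i:ℝ)+4) * B^2 := by
    have h2 : ((16^i : ℕ) : ℝ) ≤ (((4*(i+1)) * (Nat.centralBinom i)^2 : ℕ) : ℝ) := by
      exact_mod_cast fact3' i
    push_cast at h2
    rw [hB, hQ]
    calc ((4:ℝ)^i)^2 = (16:ℝ)^i := by rw [← pow_mul, mul_comm i 2, pow_mul]; norm_num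
      _ ≤ (4*(i:ℝ)+4) * ((Nat.centralBinom i : ℝ))^2 := by linarith
  set kR : ℝ := ((2*i+2 : ℕ) : ℝ) with hkR
  have hkval : kR = 2*(i:ℝ)+2 := by rw [hkR]; push_cast; ring
  have hkpos : 0 < kR := by rw [hkval]; positivity
  set s : ℝ := Real.sqrt kR with hs
  have hspos : 0 < s := Real.sqrt_pos.mpr hkpos
  set t : ℝ := kR ^ (-(5:ℝ)/4) with ht
  have htpos : 0 < t := Real.rpow_pos_of_pos hkpos _
  have ht2 : t^2 = (kR^2 * s)⁻¹ := by
    rw [ht, ← Real.rpow_natCast (kR ^ (-(5:ℝ)/4)) 2, ← Real.rpow_mul hkpos.le]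
    rw [show (-(5:ℝ)/4 * (2:ℕ)) = -((2:ℝ) + 1/2) by push_cast; norm_num]
    rw [Real.rpow_neg hkpos.le, Real.rpow_add hkpos, Real.rpow_two, ← Real.sqrt_eq_rpow, hs]
  set A : ℝ := D / (Real.sqrt (2*π) * Real.sqrt F) with hA
  have hApos : 0 < A := by
    apply div_pos hDpos
    apply mul_pos (Real.sqrt_pos.mpr (by positivity)) (Real.sqrt_pos.mpr hFpos)
  have hA2 : A^2 = D^2 / (2*π*F) := by
    rw [hA, div_pow, mul_pow, Real.sq_sqrt (by positivity), Real.sq_sqrt hFpos.le]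
  have hBs : Real.sqrt (2*(i:ℝ)+1) * B ≤ Q := by
    have h1 : (Real.sqrt (2*(i:ℝ)+1) * B)^2 ≤ Q^2 := by
      rw [mul_pow, Real.sq_sqrt (by positivity)]
      exact fact2R
    exact sqle (by positivity) hQpos.le h1
  have hQB : Q ≤ 2 * Real.sqrt ((i:ℝ)+1) * B := by
    have h1 : Q^2 ≤ (2 * Real.sqrt ((i:ℝ)+1) * B)^2 := by
      rw [mul_pow, mul_pow, Real.sq_sqrt (by positivity)]
      nlinarith [fact3R]
    exact sqle hQpos.le (by positivity) h1
  have hsqrt_mono1 : Real.sqrt ((i:ℝ)+1) ≤ s := by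
    rw [hs, hkval]; exact Real.sqrt_le_sqrt (by linarith)
  have hs_le : s ≤ Real.sqrt 2 * Real.sqrt (2*(i:ℝ)+1) := by
    rw [hs, hkval, ← Real.sqrt_mul (by norm_num)]
    exact Real.sqrt_le_sqrt (by linarith)
  have hsqrt2 : Real.sqrt 2 ≤ 2 := by
    nlinarith [Real.sq_sqrt (show (0:ℝ) ≤ 2 by norm_num), Real.sqrt_nonneg 2]
  have core_up : kR^2 * s * B ≤ 4*π*Q*((i:ℝ)+1)*(2*(i:ℝ)+1) := by
    have hnum : 4*((i:ℝ)+1)^2*Real.sqrt 2 ≤ 4*π*((i:ℝ)+1)*(2*(i:ℝ)+1) := by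
      have h1 := mul_le_mul_of_nonneg_left hsqrt2 (show (0:ℝ) ≤ 4*((i:ℝ)+1)^2 by positivity)
      have h3 : (0:ℝ) ≤ (4*((i:ℝ)+1)*(2*(i:ℝ)+1)) * (π - 3) :=
        mul_nonneg (by positivity) (by linarith [Real.pi_gt_three])
      nlinarith [h1, h3, Nat.cast_nonneg (α := ℝ) i]
    calc kR^2 * s * B = (4*((i:ℝ)+1)^2) * (s*B) := by rw [hkval]; ring
      _ ≤ (4*((i:ℝ)+1)^2) * ((Real.sqrt 2 * Real.sqrt (2*(i:ℝ)+1))*B) := by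
          apply mul_le_mul_of_nonneg_left (mul_le_mul_of_nonneg_right hs_le hBpos.le)
          positivity
      _ = (4*((i:ℝ)+1)^2*Real.sqrt 2) * (Real.sqrt (2*(i:ℝ)+1)*B) := by ring
      _ ≤ (4*((i:ℝ)+1)^2*Real.sqrt 2) * Q := by
          apply mul_le_mul_of_nonneg_left hBs
          positivity
      _ ≤ (4*π*((i:ℝ)+1)*(2*(i:ℝ)+1)) * Q := mul_le_mul_of_nonneg_right hnum hQpos.le
      _ = 4*π*Q*((i:ℝ)+1)*(2*(i:ℝ)+1) := by ring
  have core_low : Q*((i:ℝ)+1)*(2*(i:ℝ)+1) ≤ kR^2 * s * B := by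
    have hnum2 : 2*((i:ℝ)+1)*(2*(i:ℝ)+1)*B ≤ 4*((i:ℝ)+1)^2*B := by
      nlinarith [hBpos.le, Nat.cast_nonneg (α := ℝ) i]
    calc Q*((i:ℝ)+1)*(2*(i:ℝ)+1) = (((i:ℝ)+1)*(2*(i:ℝ)+1)) * Q := by ring
      _ ≤ (((i:ℝ)+1)*(2*(i:ℝ)+1)) * (2 * Real.sqrt ((i:ℝ)+1) * B) := by
          apply mul_le_mul_of_nonneg_left hQB
          positivity
      _ = (2*((i:ℝ)+1)*(2*(i:ℝ)+1)*B) * Real.sqrt ((i:ℝ)+1) := by ring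
      _ ≤ (2*((i:ℝ)+1)*(2*(i:ℝ)+1)*B) * s := by
          apply mul_le_mul_of_nonneg_left hsqrt_mono1
          positivity
      _ ≤ (4*((i:ℝ)+1)^2*B) * s := mul_le_mul_of_nonneg_right hnum2 hspos.le
      _ = kR^2 * s * B := by rw [hkval]; ring
  have upper2 : A^2 ≤ t^2 := by
    rw [hA2, ht2, inv_eq_one_div, div_le_div_iff₀ (by positivity) (by positivity)]
    have hmul : D^2 * (kR^2*s) * B ≤ 1*(2*π*F) * B := by
      calc D^2 * (kR^2*s) * B = D^2 * (kR^2*s*B) := by ring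
        _ ≤ D^2 * (4*π*Q*((i:ℝ)+1)*(2*(i:ℝ)+1)) := by
            apply mul_le_mul_of_nonneg_left core_up
            positivity
        _ = D^2 * (Q * (2*(i:ℝ)+2) * (2*(i:ℝ)+1)) * (2*π) := by ring
        _ = 1*(2*π*F) * B := by rw [fact1R]; ring
    exact le_of_mul_le_mul_right hmul hBpos
  have hF_le : F ≤ 2*D^2*(kR^2*s) := by
    have hmul : F * B ≤ 2*D^2*(kR^2*s) * B := by
      calc F * B = D^2 * (Q * (2*(i:ℝ)+2) * (2*(i:ℝ)+1)) := by rw [fact1R]; ring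
        _ = (2*D^2) * (Q*((i:ℝ)+1)*(2*(i:ℝ)+1)) := by ring
        _ ≤ (2*D^2) * (kR^2 * s * B) := by
            apply mul_le_mul_of_nonneg_left core_low
            positivity
        _ = 2*D^2*(kR^2*s) * B := by ring
    exact le_of_mul_le_mul_right hmul hBpos
  have lower2 : ((1/(2*Real.sqrt π)) * t)^2 ≤ A^2 := by
    have hcsq : ((1/(2*Real.sqrt π)) * t)^2 = 1/(4*π*(kR^2*s)) := by
      rw [mul_pow, div_pow, mul_pow, Real.sq_sqrt hπ.le, ht2, one_pow,
        show ((2:ℝ))^2 = 4 by norm_num, inv_eq_one_div, div_mul_div_comm, one_mul]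
    rw [hcsq, hA2, div_le_div_iff₀ (by positivity) (by positivity)]
    have := mul_le_mul_of_nonneg_left hF_le (show (0:ℝ) ≤ 2*π by positivity)
    nlinarith [this]
  constructor
  · exact sqle (by positivity) hApos.le lower2
  · rw [one_mul]
    exact sqle hApos.le htpos.le upper2

/-- `|σ̂_k| = Θ(k^{-5/4})` over even `k ≥ 2`. -/
theorem stmt7 : ∃ c C : ℝ, 0 < c ∧ c ≤ C ∧ ∀ k : ℕ, Even k → 2 ≤ k →
    c * (k : ℝ) ^ (-(5 : ℝ) / 4) ≤ |reluCoeff k| ∧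
    |reluCoeff k| ≤ C * (k : ℝ) ^ (-(5 : ℝ) / 4) := by
  refine ⟨1/(2*Real.sqrt π), 1, by positivity, ?_, ?_⟩
  · have h1 : (1:ℝ) ≤ Real.sqrt π := by
      rw [show (1:ℝ) = Real.sqrt 1 by simp]
      exact Real.sqrt_le_sqrt (by linarith [Real.pi_gt_three])
    rw [div_le_one (by positivity)]
    linarith
  · intro k hk h2
    obtain ⟨j, rfl⟩ := hk
    obtain ⟨i, rfl⟩ : ∃ i, j = i + 1 := ⟨j - 1, by omega⟩
    have hke : (i+1) + (i+1) = 2*i+2 := by ring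
    rw [hke, reluCoeff_abs i]
    exact partB i
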